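/- For the six-qubit state |ψ⟩ = (λ₊/√2)(−|111000⟩ + |001110⟩) + (λ₋/√2)(|100011⟩ + |010101⟩) with λ₊² + λ₋² = 1, the concurrence with respect to the bipartition (last qubit | remaining five qubits) equals 2|λ₊λ₋|, and the generalized concurrence C(2) = √(2(1 − 2·Tr ρ_A²)) with respect to the bipartition (last two qubits | remaining four qubits) also equals 2|λ₊λ₋|. -/
import Mathlib


open Matrix

/-- The six-qubit state
`|ψ⟩ = (λ₊/√2)(−|111000⟩ + |001110⟩) + (λ₋/√2)(|100011⟩ + |010101⟩)`. -/
noncomputable def ψ6 (lp lm : ℝ) : (Fin 6 → Fin 2) → ℂ := fun f =>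
  if f = ![1, 1, 1, 0, 0, 0] then ((-(lp / Real.sqrt 2) : ℝ) : ℂ)
  else if f = ![0, 0, 1, 1, 1, 0] then ((lp / Real.sqrt 2 : ℝ) : ℂ)
  else if f = ![1, 0, 0, 0, 1, 1] then ((lm / Real.sqrt 2 : ℝ) : ℂ)
  else if f = ![0, 1, 0, 1, 0, 1] then ((lm / Real.sqrt 2 : ℝ) : ℂ)
  else 0

/-- The reduced density matrix of the last qubit. -/
noncomputable def redLast1 (ψ : (Fin 6 → Fin 2) → ℂ) : Matrix (Fin 2) (Fin 2) ℂ :=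
  fun a b => ∑ f : Fin 6 → Fin 2,
    if f 5 = a then ψ f * (starRingEnd ℂ) (ψ (Function.update f 5 b)) else 0

/-- The reduced density matrix of the last two qubits. -/
noncomputable def redLast2 (ψ : (Fin 6 → Fin 2) → ℂ) :
    Matrix (Fin 2 × Fin 2) (Fin 2 × Fin 2) ℂ :=
  fun a b => ∑ f : Fin 6 → Fin 2,
    if (f 4, f 5) = a then
      ψ f * (starRingEnd ℂ) (ψ (Function.update (Function.update f 4 b.1) 5 b.2)) else 0

lemma sum_support6 (g : (Fin 6 → Fin 2) → ℂ)
    (h : ∀ f, f ≠ ![1,1,1,0,0,0] → f ≠ ![0,0,1,1,1,0] → f ≠ ![1,0,0,0,1,1] → f ≠ ![0,1,0,1,0,1] → g f = 0) :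
    ∑ f, g f = g ![1,1,1,0,0,0] + g ![0,0,1,1,1,0] + g ![1,0,0,0,1,1] + g ![0,1,0,1,0,1] := by
  rw [← Finset.sum_subset (Finset.subset_univ ({![1,1,1,0,0,0], ![0,0,1,1,1,0], ![1,0,0,0,1,1], ![0,1,0,1,0,1]} : Finset (Fin 6 → Fin 2)))]
  · rw [Finset.sum_insert (by decide), Finset.sum_insert (by decide),
      Finset.sum_insert (by decide), Finset.sum_singleton]
    ring
  · intro f _ hf
    simp only [Finset.mem_insert, Finset.mem_singleton, not_or] at hf
    exact h f hf.1 hf.2.1 hf.2.2.1 hf.2.2.2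

lemma psi_zero (lp lm : ℝ) (f : Fin 6 → Fin 2)
    (h1 : f ≠ ![1,1,1,0,0,0]) (h2 : f ≠ ![0,0,1,1,1,0])
    (h3 : f ≠ ![1,0,0,0,1,1]) (h4 : f ≠ ![0,1,0,1,0,1]) : ψ6 lp lm f = 0 := by
  simp [ψ6, h1, h2, h3, h4]

lemma red1_eq (lp lm : ℝ) :
    redLast1 (ψ6 lp lm) = Matrix.of ![![(lp^2 : ℂ), 0], ![0, (lm^2 : ℂ)]] := by
  have hs : Real.sqrt 2 ^ 2 = 2 := Real.sq_sqrt (by norm_num)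
  ext a b
  simp only [redLast1]
  rw [sum_support6 _ (fun f h1 h2 h3 h4 => by simp [psi_zero lp lm f h1 h2 h3 h4])]
  fin_cases a <;> fin_cases b <;>
    simp (config := { decide := true }) [ψ6, Function.update] <;>
    norm_cast <;>
    · have h0 : (Real.sqrt 2 : ℝ) ≠ 0 := by positivity
      field_simp
      nlinarith [hs]

lemma red2_eq (lp lm : ℝ) :
    redLast2 (ψ6 lp lm)
      = Matrix.diagonal (fun p : Fin 2 × Fin 2 => if p.2 = 0 then (lp^2/2 : ℂ) else (lm^2/2 : ℂ)) := by
  have hs : Real.sqrt 2 ^ 2 = 2 := Real.sq_sqrt (by norm_num)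
  ext a b
  simp only [redLast2]
  rw [sum_support6 _ (fun f h1 h2 h3 h4 => by simp [psi_zero lp lm f h1 h2 h3 h4])]
  fin_cases a <;> fin_cases b <;>
    simp (config := { decide := true }) [ψ6, Function.update, Matrix.diagonal] <;>
    norm_cast <;>
    · have h0 : (Real.sqrt 2 : ℝ) ≠ 0 := by positivity
      field_simp
      nlinarith [hs]

/-- For the six-qubit state `|ψ⟩` with `λ₊² + λ₋² = 1`, the concurrence with respect to
the bipartition (last qubit | remaining five) equals `2|λ₊λ₋|`, and the generalized
concurrence `C(2) = √(2(1 − 2·Tr ρ_A²))` with respect to the bipartition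
(last two qubits | remaining four) also equals `2|λ₊λ₋|`. -/
theorem stmt_17 (lp lm : ℝ) (h : lp ^ 2 + lm ^ 2 = 1) :
    Real.sqrt (2 * (1 - (Matrix.trace (redLast1 (ψ6 lp lm) * redLast1 (ψ6 lp lm))).re))
      = 2 * |lp * lm| ∧
    Real.sqrt (2 * (1 - 2 * (Matrix.trace (redLast2 (ψ6 lp lm) * redLast2 (ψ6 lp lm))).re))
      = 2 * |lp * lm| := by
  have key : ∀ x : ℝ, x = (2 * (lp * lm))^2 → Real.sqrt x = 2 * |lp * lm| := by
    intro x hx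
    rw [hx, Real.sqrt_sq_eq_abs, abs_mul]
    norm_num
  constructor
  · apply key
    rw [red1_eq]
    have : Matrix.trace (Matrix.of ![![(lp^2 : ℂ), 0], ![0, (lm^2 : ℂ)]] *
        Matrix.of ![![(lp^2 : ℂ), 0], ![0, (lm^2 : ℂ)]]) = ((lp^4 + lm^4 : ℝ) : ℂ) := by
      simp [Matrix.trace, Matrix.mul_apply, Fin.sum_univ_two]
      push_cast
      ring
    rw [this, Complex.ofReal_re]
    nlinarith [h]
  · apply key
    rw [red2_eq]
    have : Matrix.trace (Matrix.diagonal (fun p : Fin 2 × Fin 2 => if p.2 = 0 then (lp^2/2 : ℂ) else (lm^2/2 : ℂ)) *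
        Matrix.diagonal (fun p : Fin 2 × Fin 2 => if p.2 = 0 then (lp^2/2 : ℂ) else (lm^2/2 : ℂ)))
        = (((lp^4 + lm^4)/2 : ℝ) : ℂ) := by
      rw [Matrix.diagonal_mul_diagonal, Matrix.trace_diagonal]
      rw [Fintype.sum_prod_type]
      simp [Fin.sum_univ_two]
      push_cast
      ring
    rw [this, Complex.ofReal_re]
    nlinarith [h]
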